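/- Define Δ_n(x) = (x/π) ∫_0^{nx/2} sin²(y)/y² dy for n ∈ ℕ, n ≥ 1. Then for all x ∈ ℝ, |Δ_n(x) - |x|/2| ≤ 2/(n π); in particular Δ_n converges uniformly on ℝ to the function x ↦ |x|/2. -/

import Mathlib

noncomputable def Δ (n : ℕ) (x : ℝ) : ℝ :=
  (x / Real.pi) * ∫ y in (0:ℝ)..(n * x / 2), if y = 0 then (1 : ℝ) else Real.sin y ^ 2 / y ^ 2

open Real MeasureTheory Filter intervalIntegral Finset

noncomputable def g (y : ℝ) : ℝ := if y = 0 then 1 else Real.sin y ^ 2 / y ^ 2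

lemma g_nonneg (y : ℝ) : 0 ≤ g y := by
  unfold g; split
  · norm_num
  · positivity

lemma g_le_one (y : ℝ) : g y ≤ 1 := by
  unfold g; split
  · exact le_refl 1
  · rename_i h
    rw [div_le_one (by positivity)]
    exact Real.sin_sq_le_sq

lemma g_even (y : ℝ) : g (-y) = g y := by
  unfold g
  simp [neg_eq_zero]

lemma g_measurable : Measurable g := by
  unfold g
  exact Measurable.ite (measurableSet_singleton 0) measurable_const
    (by measurability)

lemma g_intable (a b : ℝ) : IntervalIntegrable g volume a b := by
  apply IntervalIntegrable.mono_fun' (g := fun _ => (1:ℝ))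
  · exact intervalIntegrable_const
  · exact g_measurable.aestronglyMeasurable
  · filter_upwards with y
    rw [Real.norm_eq_abs, abs_of_nonneg (g_nonneg y)]
    exact g_le_one y


noncomputable def P (n : ℕ) (x : ℝ) : ℝ :=
  ∑ k ∈ Finset.range n, (1 + 2 * ∑ j ∈ Finset.range k, Real.cos (2 * (j + 1) * x))

lemma dirichlet (k : ℕ) (x : ℝ) :
    Real.sin ((2 * k + 1) * x) =
      Real.sin x * (1 + 2 * ∑ j ∈ Finset.range k, Real.cos (2 * (j + 1) * x)) := by
  induction k with
  | zero => simp
  | succ k ih =>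
    have h := Real.sin_sub_sin ((2 * (k + 1 : ℕ) + 1) * x) ((2 * k + 1) * x)
    have e1 : (((2 * (k + 1 : ℕ) + 1) : ℝ) * x - (2 * k + 1) * x) / 2 = x := by
      push_cast; ring
    have e2 : (((2 * (k + 1 : ℕ) + 1) : ℝ) * x + (2 * k + 1) * x) / 2 = (2 * (k + 1)) * x := by
      push_cast; ring
    rw [e1, e2] at h
    have : Real.sin ((2 * (k + 1 : ℕ) + 1) * x)
        = Real.sin ((2 * k + 1) * x) + 2 * Real.sin x * Real.cos (2 * (k + 1) * x) := by
      linarith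
    rw [this, ih, Finset.sum_range_succ]
    push_cast
    ring

lemma fejer (n : ℕ) (x : ℝ) : Real.sin (n * x) ^ 2 = Real.sin x ^ 2 * P n x := by
  induction n with
  | zero => simp [P]
  | succ n ih =>
    have key : Real.sin (((n : ℝ) + 1) * x) ^ 2 - Real.sin (n * x) ^ 2
        = Real.sin ((2 * n + 1) * x) * Real.sin x := by
      have h1 : Real.sin (((n : ℝ) + 1) * x) ^ 2 = 1 / 2 - Real.cos (2 * (((n : ℝ) + 1) * x)) / 2 :=
        Real.sin_sq_eq_half_sub _
      have h2 : Real.sin ((n : ℝ) * x) ^ 2 = 1 / 2 - Real.cos (2 * ((n : ℝ) * x)) / 2 :=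
        Real.sin_sq_eq_half_sub _
      have h3 := Real.cos_sub_cos (2 * ((n : ℝ) * x)) (2 * (((n : ℝ) + 1) * x))
      have e1 : (2 * ((n : ℝ) * x) + 2 * (((n : ℝ) + 1) * x)) / 2 = (2 * n + 1) * x := by ring
      have e2 : (2 * ((n : ℝ) * x) - 2 * (((n : ℝ) + 1) * x)) / 2 = -x := by ring
      rw [e1, e2, Real.sin_neg] at h3
      rw [h1, h2]
      linarith
    have hd := dirichlet n x
    unfold P
    rw [Finset.sum_range_succ]
    rw [hd] at key
    unfold P at ih
    push_cast at key ih ⊢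
    linear_combination key + ih



lemma P_cont (n : ℕ) : Continuous (P n) := by
  unfold P
  exact continuous_finset_sum _ fun k _ => by
    exact continuous_const.add (continuous_const.mul (continuous_finset_sum _ fun j _ => by
      exact Real.continuous_cos.comp (continuous_const.mul continuous_id)))

lemma integral_P (n : ℕ) : ∫ x in (0:ℝ)..(Real.pi / 2), P n x = n * Real.pi / 2 := by
  unfold P
  rw [intervalIntegral.integral_finset_sum]
  · have hterm : ∀ k ∈ Finset.range n,
        (∫ x in (0:ℝ)..(Real.pi / 2), (1 + 2 * ∑ j ∈ Finset.range k, Real.cos (2 * (j + 1) * x)))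
          = Real.pi / 2 := by
      intro k _
      have hcos : ∀ j : ℕ, ∫ x in (0:ℝ)..(Real.pi / 2), Real.cos (2 * ((j:ℝ) + 1) * x) = 0 := by
        intro j
        have hc : (2 * ((j:ℝ) + 1)) ≠ 0 := by positivity
        have h := intervalIntegral.integral_comp_mul_left Real.cos (c := 2 * ((j:ℝ) + 1)) hc
          (a := (0:ℝ)) (b := Real.pi / 2)
        rw [h, mul_zero, integral_cos]
        have he : (2 * ((j:ℝ) + 1)) * (Real.pi / 2) = ((j + 1 : ℕ) : ℝ) * Real.pi := by
          push_cast; ring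
        rw [he, Real.sin_nat_mul_pi]
        simp
      rw [intervalIntegral.integral_add, intervalIntegral.integral_const_mul,
        intervalIntegral.integral_finset_sum]
      · have hz : ∀ j ∈ Finset.range k,
            (∫ x in (0:ℝ)..(Real.pi/2), Real.cos (2 * ((j:ℝ)+1) * x)) = 0 := fun j _ => hcos j
        rw [Finset.sum_congr rfl hz]
        simp
      · intro j _
        exact (Real.continuous_cos.comp (continuous_const.mul continuous_id)).intervalIntegrable _ _
      · exact intervalIntegrable_const
      · apply Continuous.intervalIntegrable
        exact continuous_const.mul (continuous_finset_sum _ fun j _ =>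
          Real.continuous_cos.comp (continuous_const.mul continuous_id))
    rw [Finset.sum_congr rfl hterm]
    simp
    ring
  · intro k _
    apply Continuous.intervalIntegrable
    exact continuous_const.add (continuous_const.mul (continuous_finset_sum _ fun j _ =>
      Real.continuous_cos.comp (continuous_const.mul continuous_id)))

lemma sub_cube_le_sin {x : ℝ} (hx : 0 ≤ x) : x - x ^ 3 / 6 ≤ Real.sin x := by
  have h : ∀ y : ℝ, HasDerivAt (fun t => Real.sin t - (t - t ^ 3 / 6))
      (Real.cos y - (1 - y ^ 2 / 2)) y := by
    intro y
    have h1 := (Real.hasDerivAt_sin y).sub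
      ((hasDerivAt_id y).sub ((hasDerivAt_pow 3 y).div_const 6))
    refine h1.congr_deriv ?_
    simp
    ring
  have mono : Monotone (fun t => Real.sin t - (t - t ^ 3 / 6)) := by
    apply monotone_of_deriv_nonneg
    · exact fun y => ((h y).differentiableAt)
    · intro y
      rw [(h y).deriv]
      have := Real.one_sub_sq_div_two_le_cos (x := y)
      linarith
  have := mono hx
  simp only [Real.sin_zero] at this
  norm_num at this
  linarith

lemma d_bound {x : ℝ} (hx : 0 < x) (hx2 : x ≤ Real.pi / 2) :
    1 / Real.sin x ^ 2 - 1 / x ^ 2 ≤ Real.pi ^ 2 / 12 := by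
  set s := Real.sin x with hs
  have hπ := Real.pi_pos
  have hs1 : 2 / Real.pi * x ≤ s := Real.mul_le_sin hx.le hx2
  have hs0 : 0 < s := lt_of_lt_of_le (by positivity) hs1
  have hsx : s ≤ x := Real.sin_le hx.le
  have hcube : x - x ^ 3 / 6 ≤ s := sub_cube_le_sin hx.le
  rw [div_sub_div _ _ (by positivity) (by positivity), div_le_iff₀ (by positivity)]
  have key1 : x ^ 2 - s ^ 2 ≤ x ^ 4 / 3 := by nlinarith
  have h1' : 2 * x ≤ Real.pi * s := by
    rw [div_mul_eq_mul_div, div_le_iff₀ hπ] at hs1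
    linarith
  have h2' : 4 * x ^ 2 ≤ Real.pi ^ 2 * s ^ 2 := by nlinarith
  nlinarith [key1, mul_le_mul_of_nonneg_right h2' (sq_nonneg x)]

noncomputable def F (T : ℝ) : ℝ := ∫ y in (0:ℝ)..T, g y

lemma F_add (S T : ℝ) : F T = F S + ∫ y in S..T, g y := by
  unfold F
  rw [intervalIntegral.integral_add_adjacent_intervals (g_intable 0 S) (g_intable S T)]

lemma F_mono {S T : ℝ} (hST : S ≤ T) : F S ≤ F T := by
  rw [F_add S T]
  have : 0 ≤ ∫ y in S..T, g y :=
    intervalIntegral.integral_nonneg hST (fun y _ => g_nonneg y)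
  linarith

lemma F_tail {S T : ℝ} (hS : 0 < S) (hST : S ≤ T) : F T - F S ≤ 1 / S - 1 / T := by
  rw [F_add S T]
  have hT : 0 < T := lt_of_lt_of_le hS hST
  have h0 : (0:ℝ) ∉ Set.uIcc S T := by
    rw [Set.uIcc_of_le hST]
    intro h
    exact absurd (Set.mem_Icc.1 h).1 (not_le.2 hS)
  have hint : IntervalIntegrable (fun x : ℝ => x ^ (-2 : ℤ)) volume S T := by
    apply ContinuousOn.intervalIntegrable
    intro x hx
    exact ((continuousAt_zpow₀ x _ (Or.inl (fun h => h0 (h ▸ hx)))).continuousWithinAt)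
  have hmono : (∫ y in S..T, g y) ≤ ∫ y in S..T, y ^ (-2 : ℤ) := by
    apply intervalIntegral.integral_mono_on hST (g_intable S T) hint
    intro x hx
    have hx0 : 0 < x := lt_of_lt_of_le hS hx.1
    have hg : g x = Real.sin x ^ 2 / x ^ 2 := by unfold g; rw [if_neg hx0.ne']
    rw [hg, zpow_neg, div_le_iff₀ (by positivity)]
    have h1 : Real.sin x ^ 2 ≤ 1 := Real.sin_sq_le_one x
    have h2 : (x ^ (2:ℤ))⁻¹ * x ^ 2 = 1 := by
      rw [zpow_two, ← sq, inv_mul_cancel₀ (by positivity)]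
    rw [h2]
    exact h1
  have hz : (∫ y in S..T, y ^ (-2 : ℤ)) = 1 / S - 1 / T := by
    rw [integral_zpow (Or.inr ⟨by norm_num, h0⟩)]
    norm_num
    ring
  rw [hz] at hmono
  linarith

lemma F_fejer (n : ℕ) (hn : 1 ≤ n) :
    F (n * Real.pi / 2) ≤ Real.pi / 2 ∧
      Real.pi / 2 - Real.pi ^ 3 / (24 * n) ≤ F (n * Real.pi / 2) := by
  have hπ := Real.pi_pos
  have hn0 : (0:ℝ) < n := by exact_mod_cast hn
  set I := ∫ x in Set.Ioc (0:ℝ) (Real.pi/2), g (n * x) with hI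
  have hcomp : F (n * Real.pi / 2) = n * I := by
    have h1 : (∫ x in (0:ℝ)..(Real.pi/2), g (n * x))
        = (n:ℝ)⁻¹ * F (n * Real.pi / 2) := by
      rw [intervalIntegral.integral_comp_mul_left g (c := (n:ℝ)) hn0.ne']
      unfold F
      rw [mul_zero, smul_eq_mul, mul_div_assoc]
    have h2 : (∫ x in (0:ℝ)..(Real.pi/2), g (n * x)) = I := by
      rw [intervalIntegral.integral_of_le (by positivity)]
    rw [h2] at h1
    field_simp at h1
    linarith [h1]
  have hint1 : IntegrableOn (fun x => g ((n:ℝ) * x)) (Set.Ioc (0:ℝ) (Real.pi/2)) volume := by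
    rw [← intervalIntegrable_iff_integrableOn_Ioc_of_le (by positivity)]
    have := (g_intable 0 ((n:ℝ) * (Real.pi/2))).comp_mul_left (c := (n:ℝ))
    rwa [zero_div, mul_div_cancel_left₀ _ hn0.ne'] at this
  have hint2 : IntegrableOn (fun x => P n x / (n:ℝ)^2) (Set.Ioc (0:ℝ) (Real.pi/2)) volume :=
    ((P_cont n).div_const _).integrableOn_Ioc
  have hint3 : IntegrableOn (fun x => P n x / (n:ℝ)^2 - Real.pi^2/(12*(n:ℝ)^2))
      (Set.Ioc (0:ℝ) (Real.pi/2)) volume :=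
    hint2.sub (integrableOn_const measure_Ioc_lt_top.ne)
  have hptu : ∀ x ∈ Set.Ioc (0:ℝ) (Real.pi/2), g ((n:ℝ) * x) ≤ P n x / (n:ℝ)^2 := by
    intro x hx
    obtain ⟨hx0, hx2⟩ := hx
    have hsin : 0 < Real.sin x :=
      Real.sin_pos_of_pos_of_lt_pi hx0 (lt_of_le_of_lt hx2 (by linarith))
    have hnx : (n:ℝ) * x ≠ 0 := by positivity
    have hgnx : g ((n:ℝ) * x) = Real.sin ((n:ℝ) * x) ^ 2 / ((n:ℝ)^2 * x ^ 2) := by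
      unfold g
      rw [if_neg hnx, mul_pow]
    have hP : P n x / (n:ℝ)^2 = Real.sin ((n:ℝ) * x) ^ 2 / ((n:ℝ)^2 * Real.sin x ^ 2) := by
      rw [fejer n x]
      field_simp
    rw [hgnx, hP]
    apply div_le_div_of_nonneg_left (sq_nonneg _) (by positivity)
    have := Real.sin_sq_le_sq (x := x)
    nlinarith
  have hptl : ∀ x ∈ Set.Ioc (0:ℝ) (Real.pi/2),
      P n x / (n:ℝ)^2 - Real.pi^2/(12*(n:ℝ)^2) ≤ g ((n:ℝ) * x) := by
    intro x hx
    obtain ⟨hx0, hx2⟩ := hx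
    have hsin : 0 < Real.sin x :=
      Real.sin_pos_of_pos_of_lt_pi hx0 (lt_of_le_of_lt hx2 (by linarith))
    have hnx : (n:ℝ) * x ≠ 0 := by positivity
    have hgnx : g ((n:ℝ) * x) = Real.sin ((n:ℝ) * x) ^ 2 / ((n:ℝ)^2 * x ^ 2) := by
      unfold g
      rw [if_neg hnx, mul_pow]
    have hP : P n x / (n:ℝ)^2 = Real.sin ((n:ℝ) * x) ^ 2 / ((n:ℝ)^2 * Real.sin x ^ 2) := by
      rw [fejer n x]
      field_simp
    rw [hgnx, hP]
    have hd0 : 1 / x ^ 2 ≤ 1 / Real.sin x ^ 2 :=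
      one_div_le_one_div_of_le (by positivity) Real.sin_sq_le_sq
    have hd1 := d_bound hx0 hx2
    have hs1 : Real.sin ((n:ℝ) * x) ^ 2 ≤ 1 := Real.sin_sq_le_one _
    have hs0 : 0 ≤ Real.sin ((n:ℝ) * x) ^ 2 := sq_nonneg _
    have key : Real.sin ((n:ℝ)*x)^2 * (1 / Real.sin x ^ 2 - 1 / x ^ 2) ≤ 1 * (Real.pi^2/12) :=
      mul_le_mul hs1 hd1 (by linarith) one_pos.le
    have e1 : Real.sin ((n:ℝ) * x) ^ 2 / ((n:ℝ)^2 * Real.sin x ^ 2)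
        - Real.sin ((n:ℝ) * x) ^ 2 / ((n:ℝ)^2 * x ^ 2)
        = (Real.sin ((n:ℝ)*x)^2 * (1 / Real.sin x ^ 2 - 1 / x ^ 2)) / (n:ℝ)^2 := by
      field_simp
    have e2 : Real.pi^2/(12*(n:ℝ)^2) = (1 * (Real.pi^2/12)) / (n:ℝ)^2 := by
      field_simp
    rw [e2]
    have hq := (div_le_div_iff_of_pos_right (c := (n:ℝ)^2) (by positivity)).2 key
    linarith [e1, hq]
  have hup : I ≤ ∫ x in Set.Ioc (0:ℝ) (Real.pi/2), P n x / (n:ℝ)^2 :=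
    setIntegral_mono_on hint1 hint2 measurableSet_Ioc hptu
  have hlow : (∫ x in Set.Ioc (0:ℝ) (Real.pi/2),
      (P n x / (n:ℝ)^2 - Real.pi^2/(12*(n:ℝ)^2))) ≤ I :=
    setIntegral_mono_on hint3 hint1 measurableSet_Ioc hptl
  have hPval : (∫ x in Set.Ioc (0:ℝ) (Real.pi/2), P n x / (n:ℝ)^2)
      = (n * Real.pi / 2) / (n:ℝ)^2 := by
    rw [MeasureTheory.integral_div, ← intervalIntegral.integral_of_le (by positivity : (0:ℝ) ≤ Real.pi/2),
      integral_P]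
  have hcval : (∫ x in Set.Ioc (0:ℝ) (Real.pi/2), (Real.pi^2/(12*(n:ℝ)^2) : ℝ))
      = (Real.pi/2) * (Real.pi^2/(12*(n:ℝ)^2)) := by
    rw [setIntegral_const, Real.volume_real_Ioc, smul_eq_mul]
    norm_num [ENNReal.toReal_ofReal (by positivity : (0:ℝ) ≤ Real.pi/2)]
    exact Or.inl (by positivity)
  have hsub : (∫ x in Set.Ioc (0:ℝ) (Real.pi/2),
      (P n x / (n:ℝ)^2 - Real.pi^2/(12*(n:ℝ)^2)))
      = (n * Real.pi / 2) / (n:ℝ)^2 - (Real.pi/2) * (Real.pi^2/(12*(n:ℝ)^2)) := by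
    rw [integral_sub hint2 (integrableOn_const measure_Ioc_lt_top.ne), hPval, hcval]
  rw [hsub] at hlow
  rw [hPval] at hup
  constructor
  · rw [hcomp]
    calc (n:ℝ) * I ≤ (n:ℝ) * ((n * Real.pi / 2) / (n:ℝ)^2) :=
          mul_le_mul_of_nonneg_left hup hn0.le
      _ = Real.pi / 2 := by field_simp
  · rw [hcomp]
    have h := mul_le_mul_of_nonneg_left hlow hn0.le
    have e : (n:ℝ) * ((n * Real.pi / 2) / (n:ℝ)^2 - (Real.pi/2) * (Real.pi^2/(12*(n:ℝ)^2)))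
        = Real.pi / 2 - Real.pi ^ 3 / (24 * n) := by
      field_simp
      ring
    linarith [e ▸ h]

lemma F_bounds {T : ℝ} (hT : 0 < T) :
    Real.pi / 2 - 1 / T ≤ F T ∧ F T ≤ Real.pi / 2 := by
  have hπ := Real.pi_pos
  obtain ⟨m, hm⟩ := exists_nat_ge (2 * T / Real.pi)
  set N := max m 1 with hN
  have hN1 : 1 ≤ N := le_max_right _ _
  have hTN : ∀ n : ℕ, N ≤ n → T ≤ n * Real.pi / 2 := by
    intro n hn
    have h1 : (m : ℝ) ≤ n := by
      exact_mod_cast le_trans (le_max_left m 1) hn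
    have : 2 * T / Real.pi ≤ (n : ℝ) := le_trans hm h1
    rw [div_le_iff₀ hπ] at this
    linarith
  constructor
  · -- lower bound via limit
    have hev : ∀ᶠ n : ℕ in atTop, Real.pi / 2 - Real.pi ^ 3 / (24 * n) - 1 / T ≤ F T := by
      filter_upwards [eventually_ge_atTop N] with n hn
      have hn1 : 1 ≤ n := le_trans hN1 hn
      have hTn := hTN n hn
      have htail := F_tail hT hTn
      have hfej := (F_fejer n hn1).2
      have : 0 < 1 / ((n:ℝ) * Real.pi / 2) := by
        have : (0:ℝ) < n := by exact_mod_cast hn1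
        positivity
      linarith
    have hlim : Tendsto (fun n : ℕ => Real.pi / 2 - Real.pi ^ 3 / (24 * n) - 1 / T)
        atTop (nhds (Real.pi / 2 - 0 - 1 / T)) := by
      apply Tendsto.sub _ tendsto_const_nhds
      apply Tendsto.sub tendsto_const_nhds
      have : (fun n : ℕ => Real.pi ^ 3 / (24 * n)) = fun n : ℕ => (Real.pi ^ 3 / 24) * (1 / n) := by
        funext n
        field_simp
      rw [this]
      simpa using (tendsto_one_div_atTop_nhds_zero_nat (𝕜 := ℝ)).const_mul (Real.pi ^ 3 / 24)
    have := le_of_tendsto hlim hev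
    linarith
  · -- upper bound
    have h1 := F_mono (hTN N le_rfl)
    exact le_trans h1 (F_fejer N hN1).1

lemma delta_eq (n : ℕ) (x : ℝ) : Δ n x = (|x| / Real.pi) * F (n * |x| / 2) := by
  have hg : (fun y : ℝ => if y = 0 then (1:ℝ) else Real.sin y ^ 2 / y ^ 2) = g := rfl
  rcases le_or_gt 0 x with hx | hx
  · rw [abs_of_nonneg hx]; rfl
  · rw [abs_of_neg hx]
    unfold Δ F
    rw [hg]
    have hneg : (n:ℝ) * x / 2 = -((n:ℝ) * -x / 2) := by ring
    rw [hneg]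
    have h1 : (∫ y in (0:ℝ)..(-((n:ℝ) * -x / 2)), g y)
        = - ∫ y in (0:ℝ)..((n:ℝ) * -x / 2), g y := by
      rw [intervalIntegral.integral_symm]
      congr 1
      have h2 := intervalIntegral.integral_comp_neg (a := (0:ℝ)) (b := (n:ℝ) * -x / 2) (f := g)
      rw [neg_zero] at h2
      rw [← h2]
      apply intervalIntegral.integral_congr
      intro y _
      exact g_even y
    rw [h1]
    ring

lemma main_bound (n : ℕ) (hn : 1 ≤ n) (x : ℝ) :
    |Δ n x - |x| / 2| ≤ 2 / (n * Real.pi) := by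
  have hπ := Real.pi_pos
  have hn0 : (0:ℝ) < n := by exact_mod_cast hn
  rcases eq_or_ne x 0 with rfl | hx
  · simp [delta_eq]
    positivity
  · have hax : 0 < |x| := abs_pos.2 hx
    set T := (n:ℝ) * |x| / 2 with hT
    have hT0 : 0 < T := by positivity
    obtain ⟨hlow, hup⟩ := F_bounds hT0
    rw [delta_eq]
    have e : (|x| / Real.pi) * F T - |x| / 2 = (|x| / Real.pi) * (F T - Real.pi / 2) := by
      field_simp
    rw [e, abs_mul, abs_of_nonneg (by positivity : (0:ℝ) ≤ |x| / Real.pi)]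
    have habs : |F T - Real.pi / 2| ≤ 1 / T := by
      rw [abs_le]
      constructor <;> [linarith; linarith]
    calc |x| / Real.pi * |F T - Real.pi / 2| ≤ |x| / Real.pi * (1 / T) :=
          mul_le_mul_of_nonneg_left habs (by positivity)
      _ = 2 / (n * Real.pi) := by
          rw [hT]
          field_simp

theorem stmt_7 :
    (∀ n : ℕ, 1 ≤ n → ∀ x : ℝ, |Δ n x - |x| / 2| ≤ 2 / (n * Real.pi)) ∧
    TendstoUniformly (fun n : ℕ => Δ n) (fun x : ℝ => |x| / 2) Filter.atTop := by
  have hπ := Real.pi_pos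
  refine ⟨fun n hn x => main_bound n hn x, ?_⟩
  rw [Metric.tendstoUniformly_iff]
  intro ε hε
  have hlim : Tendsto (fun n : ℕ => 2 / ((n:ℝ) * Real.pi)) atTop (nhds 0) := by
    have : (fun n : ℕ => 2 / ((n:ℝ) * Real.pi)) = fun n : ℕ => (2 / Real.pi) * (1 / n) := by
      funext n
      field_simp
    rw [this]
    simpa using (tendsto_one_div_atTop_nhds_zero_nat (𝕜 := ℝ)).const_mul (2 / Real.pi)
  have hev := hlim.eventually (eventually_lt_nhds hε)
  filter_upwards [hev, eventually_ge_atTop 1] with n h1 h2 x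
  rw [Real.dist_eq, abs_sub_comm]
  exact lt_of_le_of_lt (main_bound n h2 x) h1
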